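/- arXiv:1102.5067 — 8 statements merged into one kernel-verified Lean document; each statement's English description precedes it below -/
import Mathlib

section
/- Let h be the flow of σ as in the context. For each fixed y ∈ ℝ, the function F(x) = exp(−∫₀^y σ'(h(x,s)) ds) is differentiable in x, and |F'(x)| ≤ M₃ |y| exp(2 M₂ |y|) for all x ∈ ℝ. -/
/-!
Differentiating under the integral sign, `∂ₓ ∫₀^y σ'(h(x,s)) ds = ∫₀^y σ''(h(x,t)) ∂ₓh(x,t) dt`
with `∂ₓh(x,t) = exp(∫₀^t σ'(h(x,r)) dr) ≤ exp(M₂ |y|)` for `t` between `0` and `y`, so this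
derivative is at most `M₃ exp(M₂ |y|) |y|`; the chain rule for `exp(-·)` contributes one more
factor `exp(M₂ |y|)`.
-/

open Real Set intervalIntegral

lemma abs_integral_le_mul_abs {g : ℝ → ℝ} {C : ℝ} (hg : ∀ r, |g r| ≤ C) (t : ℝ) :
    |∫ r in (0:ℝ)..t, g r| ≤ C * |t| := by
  simpa using norm_integral_le_of_norm_le_const (a := 0) (b := t) fun r _ =>
    (Real.norm_eq_abs (g r)).trans_le (hg r)

lemma exp_integral_le_of_mem_uIoc {g : ℝ → ℝ} {C t y : ℝ} (hg : ∀ r, |g r| ≤ C)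
    (ht : t ∈ uIoc 0 y) : exp (∫ r in (0:ℝ)..t, g r) ≤ exp (C * |y|) := by
  have hty : |t| ≤ |y| := by simpa using abs_sub_left_of_mem_uIcc (uIoc_subset_uIcc ht)
  have hC : 0 ≤ C := (abs_nonneg _).trans (hg 0)
  exact exp_le_exp.2 <| (le_abs_self _).trans <|
    (abs_integral_le_mul_abs hg t).trans (mul_le_mul_of_nonneg_left hty hC)

lemma abs_mul_exp_integral_le {g k : ℝ → ℝ} {C K t y : ℝ} (hg : ∀ r, |g r| ≤ C)
    (hk : ∀ r, |k r| ≤ K) (ht : t ∈ uIoc 0 y) :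
    |k t * exp (∫ r in (0:ℝ)..t, g r)| ≤ K * exp (C * |y|) := by
  rw [abs_mul, abs_of_pos (exp_pos _)]
  exact mul_le_mul (hk t) (exp_integral_le_of_mem_uIoc hg ht) (exp_pos _).le
    ((abs_nonneg _).trans (hk 0))

section FlowSensitivity

variable {f : ℝ → ℝ} {h : ℝ → ℝ → ℝ} {M₂ M₃ : ℝ}

lemma hasDerivAt_integral_comp_flow (hf : ContDiff ℝ 1 f) (hfb : ∀ x, |f x| ≤ M₂)
    (hf'b : ∀ x, |deriv f x| ≤ M₃) (hcont : ∀ x, Continuous (h x))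
    (hhx : ∀ x y, HasDerivAt (fun x => h x y) (exp (∫ s in (0:ℝ)..y, f (h x s))) x)
    (y x₀ : ℝ) :
    HasDerivAt (fun x => ∫ s in (0:ℝ)..y, f (h x s))
      (∫ t in (0:ℝ)..y, deriv f (h x₀ t) * exp (∫ r in (0:ℝ)..t, f (h x₀ r))) x₀ := by
  have hfh : ∀ x, Continuous fun s => f (h x s) := fun x => hf.continuous.comp (hcont x)
  have hderiv_cont : Continuous fun t =>
      deriv f (h x₀ t) * exp (∫ r in (0:ℝ)..t, f (h x₀ r)) :=
    ((hf.continuous_deriv le_rfl).comp (hcont x₀)).mul <| continuous_exp.comp <|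
      continuous_primitive (fun a b => (hfh x₀).intervalIntegrable a b) 0
  refine (hasDerivAt_integral_of_dominated_loc_of_deriv_le
    (bound := fun _ => M₃ * exp (M₂ * |y|))
    (Metric.ball_mem_nhds x₀ one_pos)
    (Filter.Eventually.of_forall fun x => (hfh x).aestronglyMeasurable.restrict)
    ((hfh x₀).intervalIntegrable 0 y) hderiv_cont.aestronglyMeasurable.restrict
    (Filter.Eventually.of_forall fun t ht x _ =>
      abs_mul_exp_integral_le (fun r => hfb (h x r)) (fun r => hf'b (h x r)) ht)
    intervalIntegrable_const
    (Filter.Eventually.of_forall fun t _ x _ =>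
      ((hf.differentiable one_ne_zero (h x t)).hasDerivAt).comp x (hhx x t))).2

end FlowSensitivity

theorem flow_inv_deriv_x_bound_general
    (σ : ℝ → ℝ) (h : ℝ → ℝ → ℝ) (M₂ M₃ : ℝ)
    (hσ : ContDiff ℝ 2 σ)
    (hσ'b : ∀ x, |deriv σ x| ≤ M₂)
    (hσ''b : ∀ x, |deriv (deriv σ) x| ≤ M₃)
    (hhy : ∀ x y, HasDerivAt (fun y => h x y) (σ (h x y)) y)
    (hhx : ∀ x y, HasDerivAt (fun x => h x y)
      (Real.exp (∫ s in (0:ℝ)..y, deriv σ (h x s))) x) :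
    ∀ y : ℝ,
      Differentiable ℝ (fun x => Real.exp (-∫ s in (0:ℝ)..y, deriv σ (h x s))) ∧
      ∀ x : ℝ,
        |deriv (fun x => Real.exp (-∫ s in (0:ℝ)..y, deriv σ (h x s))) x| ≤
          M₃ * |y| * Real.exp (2 * M₂ * |y|) := by
  intro y
  have hσ' : ContDiff ℝ 1 (deriv σ) := hσ.deriv' (n := 1)
  have hcont : ∀ x, Continuous (h x) := fun x =>
    continuous_iff_continuousAt.2 fun s => (hhy x s).continuousAt
  have hderiv x : HasDerivAt (fun x => exp (-∫ s in (0:ℝ)..y, deriv σ (h x s)))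
      (exp (-∫ s in (0:ℝ)..y, deriv σ (h x s)) * -∫ t in (0:ℝ)..y,
        deriv (deriv σ) (h x t) * exp (∫ r in (0:ℝ)..t, deriv σ (h x r))) x :=
    (hasDerivAt_integral_comp_flow hσ' hσ'b hσ''b hcont hhx y x).neg.exp
  refine ⟨fun x => (hderiv x).differentiableAt, fun x => ?_⟩
  rw [(hderiv x).deriv, abs_mul, abs_neg, abs_of_pos (exp_pos _)]
  have hexp : exp (-∫ s in (0:ℝ)..y, deriv σ (h x s)) ≤ exp (M₂ * |y|) :=
    exp_le_exp.2 <| (neg_le_abs _).trans (abs_integral_le_mul_abs (fun s => hσ'b (h x s)) y)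
  have hint : |∫ t in (0:ℝ)..y, deriv (deriv σ) (h x t) *
      exp (∫ r in (0:ℝ)..t, deriv σ (h x r))| ≤ M₃ * exp (M₂ * |y|) * |y| := by
    simpa using norm_integral_le_of_norm_le_const (a := 0) (b := y) fun t ht =>
      (Real.norm_eq_abs _).trans_le <|
        abs_mul_exp_integral_le (fun r => hσ'b (h x r)) (fun r => hσ''b (h x r)) ht
  calc exp (-∫ s in (0:ℝ)..y, deriv σ (h x s)) * |∫ t in (0:ℝ)..y, deriv (deriv σ) (h x t) *
        exp (∫ r in (0:ℝ)..t, deriv σ (h x r))|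
      ≤ exp (M₂ * |y|) * (M₃ * exp (M₂ * |y|) * |y|) :=
        mul_le_mul hexp hint (abs_nonneg _) (exp_pos _).le
    _ = M₃ * |y| * exp (2 * M₂ * |y|) := by rw [two_mul, add_mul, exp_add]; ring

/-- For fixed `y`, the map `x ↦ exp(−∫₀^y σ'(h(x,s)) ds)` is differentiable and its
derivative is bounded by `M₃ |y| exp(2 M₂ |y|)`. -/
theorem flow_inv_deriv_x_bound
    (σ : ℝ → ℝ) (h : ℝ → ℝ → ℝ) (M₂ M₃ M₅ : ℝ)
    (hM₂ : 0 < M₂) (hM₃ : 0 < M₃) (hM₅ : 0 < M₅)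
    (hσ : ContDiff ℝ 2 σ)
    (hσb : ∀ x, |σ x| ≤ M₅)
    (hσ'b : ∀ x, |deriv σ x| ≤ M₂)
    (hσ''b : ∀ x, |deriv (deriv σ) x| ≤ M₃)
    (hh0 : ∀ x, h x 0 = x)
    (hhy : ∀ x y, HasDerivAt (fun y => h x y) (σ (h x y)) y)
    (hhx : ∀ x y, HasDerivAt (fun x => h x y)
      (Real.exp (∫ s in (0:ℝ)..y, deriv σ (h x s))) x) :
    ∀ y : ℝ,
      Differentiable ℝ (fun x => Real.exp (-∫ s in (0:ℝ)..y, deriv σ (h x s))) ∧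
      ∀ x : ℝ,
        |deriv (fun x => Real.exp (-∫ s in (0:ℝ)..y, deriv σ (h x s))) x| ≤
          M₃ * |y| * Real.exp (2 * M₂ * |y|) :=
  flow_inv_deriv_x_bound_general σ h M₂ M₃ hσ hσ'b hσ''b hhy hhx
end

section
/- Let h be the flow of σ as in the context. Then for all x₁, x₂, y ∈ ℝ, |exp(−∫₀^y σ'(h(x₁,s)) ds) − exp(−∫₀^y σ'(h(x₂,s)) ds)| ≤ M₃ |y| exp(2 M₂ |y|) |x₁ − x₂|. -/
/-! Since `∂ₓh(x, y) = exp(∫₀^y σ'(h(x, s)) ds)` and `|σ'| ≤ M₂`, the flow is `exp(M₂|y|)`-Lipschitz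
in `x`. As `σ'` is `M₃`-Lipschitz, the two integrals `∫₀^y σ'(h(xᵢ, s)) ds` then differ by at most
`M₃ |y| exp(M₂|y|) |x₁ - x₂|`, and both of their negatives are at most `M₂|y|`, where `exp` is
`exp(M₂|y|)`-Lipschitz. -/

open Real

lemma abs_sub_le_of_hasDerivAt_of_abs_le {f f' : ℝ → ℝ} {C : ℝ}
    (hf : ∀ x, HasDerivAt f (f' x) x) (hC : ∀ x, |f' x| ≤ C) (a b : ℝ) :
    |f a - f b| ≤ C * |a - b| := by
  simpa only [Real.norm_eq_abs] using
    convex_univ.norm_image_sub_le_of_norm_hasDerivWithin_le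
      (fun x _ => (hf x).hasDerivWithinAt) (fun x _ => hC x) (Set.mem_univ b) (Set.mem_univ a)

lemma abs_exp_sub_exp_le_of_le {c u v : ℝ} (hu : u ≤ c) (hv : v ≤ c) :
    |exp u - exp v| ≤ exp c * |u - v| := by
  simpa only [Real.norm_eq_abs] using
    (convex_Iic c).norm_image_sub_le_of_norm_hasDerivWithin_le
      (fun x _ => (hasDerivAt_exp x).hasDerivWithinAt)
      (fun x hx => by rw [Real.norm_eq_abs, abs_of_pos (exp_pos x)]; exact exp_le_exp.2 hx)
      hv hu

lemma abs_intervalIntegral_le_of_abs_le {g : ℝ → ℝ} {M z : ℝ}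
    (hg : ∀ s ∈ Set.uIoc 0 z, |g s| ≤ M) : |∫ s in (0 : ℝ)..z, g s| ≤ M * |z| := by
  simpa only [Real.norm_eq_abs, sub_zero] using
    intervalIntegral.norm_integral_le_of_norm_le_const (a := 0) (b := z)
      fun s hs => (Real.norm_eq_abs (g s)).trans_le (hg s hs)

lemma abs_le_abs_of_mem_uIoc_zero {s y : ℝ} (hs : s ∈ Set.uIoc 0 y) : |s| ≤ |y| := by
  simpa using Set.abs_sub_left_of_mem_uIcc (Set.uIoc_subset_uIcc hs)

lemma abs_deriv_sub_deriv_le_of_contDiff_two {σ : ℝ → ℝ} {M₃ : ℝ} (hσ : ContDiff ℝ 2 σ)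
    (hσ''b : ∀ x, |deriv (deriv σ) x| ≤ M₃) (a b : ℝ) :
    |deriv σ a - deriv σ b| ≤ M₃ * |a - b| := by
  have hσ' : Differentiable ℝ (deriv σ) :=
    ((contDiff_succ_iff_deriv (n := 1)).mp hσ).2.2.differentiable one_ne_zero
  exact abs_sub_le_of_hasDerivAt_of_abs_le (fun x => (hσ' x).hasDerivAt) hσ''b a b

section Flow

variable {σ : ℝ → ℝ} {h : ℝ → ℝ → ℝ} {M₂ M₃ : ℝ}

lemma abs_integral_deriv_flow_le (hσ'b : ∀ x, |deriv σ x| ≤ M₂) (x z : ℝ) :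
    |∫ s in (0 : ℝ)..z, deriv σ (h x s)| ≤ M₂ * |z| :=
  abs_intervalIntegral_le_of_abs_le fun s _ => hσ'b (h x s)

lemma abs_flow_sub_le (hσ'b : ∀ x, |deriv σ x| ≤ M₂)
    (hhx : ∀ x y, HasDerivAt (fun x => h x y) (exp (∫ s in (0 : ℝ)..y, deriv σ (h x s))) x)
    (s x₁ x₂ : ℝ) : |h x₁ s - h x₂ s| ≤ exp (M₂ * |s|) * |x₁ - x₂| := by
  refine abs_sub_le_of_hasDerivAt_of_abs_le (fun x => hhx x s) (fun x => ?_) x₁ x₂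
  rw [abs_of_pos (exp_pos _)]
  exact exp_le_exp.2 ((le_abs_self _).trans (abs_integral_deriv_flow_le hσ'b x s))

lemma abs_integral_deriv_flow_sub_le (hσ : ContDiff ℝ 2 σ)
    (hσ'b : ∀ x, |deriv σ x| ≤ M₂) (hσ''b : ∀ x, |deriv (deriv σ) x| ≤ M₃)
    (hhy : ∀ x y, HasDerivAt (fun y => h x y) (σ (h x y)) y)
    (hhx : ∀ x y, HasDerivAt (fun x => h x y) (exp (∫ s in (0 : ℝ)..y, deriv σ (h x s))) x)
    (x₁ x₂ y : ℝ) :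
    |(∫ s in (0 : ℝ)..y, deriv σ (h x₁ s)) - ∫ s in (0 : ℝ)..y, deriv σ (h x₂ s)| ≤
      M₃ * exp (M₂ * |y|) * |x₁ - x₂| * |y| := by
  have hM₂ : 0 ≤ M₂ := (abs_nonneg _).trans (hσ'b 0)
  have hM₃ : 0 ≤ M₃ := (abs_nonneg _).trans (hσ''b 0)
  have hint : ∀ x, IntervalIntegrable (fun s => deriv σ (h x s)) MeasureTheory.volume 0 y :=
    fun x => ((hσ.continuous_deriv one_le_two).comp
      (continuous_iff_continuousAt.2 fun s => (hhy x s).continuousAt)).intervalIntegrable 0 y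
  rw [← intervalIntegral.integral_sub (hint x₁) (hint x₂)]
  refine abs_intervalIntegral_le_of_abs_le fun s hs => ?_
  calc |deriv σ (h x₁ s) - deriv σ (h x₂ s)|
      ≤ M₃ * |h x₁ s - h x₂ s| := abs_deriv_sub_deriv_le_of_contDiff_two hσ hσ''b _ _
    _ ≤ M₃ * (exp (M₂ * |s|) * |x₁ - x₂|) := by gcongr; exact abs_flow_sub_le hσ'b hhx s x₁ x₂
    _ ≤ M₃ * (exp (M₂ * |y|) * |x₁ - x₂|) := by
        gcongr M₃ * (exp (M₂ * ?_) * _); exact abs_le_abs_of_mem_uIoc_zero hs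
    _ = M₃ * exp (M₂ * |y|) * |x₁ - x₂| := by ring

end Flow

theorem flow_inv_lipschitz_x_general
    (σ : ℝ → ℝ) (h : ℝ → ℝ → ℝ) (M₂ M₃ : ℝ)
    (hσ : ContDiff ℝ 2 σ)
    (hσ'b : ∀ x, |deriv σ x| ≤ M₂)
    (hσ''b : ∀ x, |deriv (deriv σ) x| ≤ M₃)
    (hhy : ∀ x y, HasDerivAt (fun y => h x y) (σ (h x y)) y)
    (hhx : ∀ x y, HasDerivAt (fun x => h x y)
      (Real.exp (∫ s in (0:ℝ)..y, deriv σ (h x s))) x) :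
    ∀ x₁ x₂ y : ℝ,
      |Real.exp (-∫ s in (0:ℝ)..y, deriv σ (h x₁ s)) -
        Real.exp (-∫ s in (0:ℝ)..y, deriv σ (h x₂ s))| ≤
        M₃ * |y| * Real.exp (2 * M₂ * |y|) * |x₁ - x₂| := by
  intro x₁ x₂ y
  set a := ∫ s in (0:ℝ)..y, deriv σ (h x₁ s)
  set b := ∫ s in (0:ℝ)..y, deriv σ (h x₂ s)
  have ha : -a ≤ M₂ * |y| := (neg_le_abs a).trans (abs_integral_deriv_flow_le hσ'b x₁ y)
  have hb : -b ≤ M₂ * |y| := (neg_le_abs b).trans (abs_integral_deriv_flow_le hσ'b x₂ y)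
  calc |exp (-a) - exp (-b)|
      ≤ exp (M₂ * |y|) * |a - b| := by
        simpa only [neg_sub_neg, abs_sub_comm b a] using abs_exp_sub_exp_le_of_le ha hb
    _ ≤ exp (M₂ * |y|) * (M₃ * exp (M₂ * |y|) * |x₁ - x₂| * |y|) := by
        gcongr; exact abs_integral_deriv_flow_sub_le hσ hσ'b hσ''b hhy hhx x₁ x₂ y
    _ = M₃ * |y| * exp (2 * M₂ * |y|) * |x₁ - x₂| := by
        rw [show 2 * M₂ * |y| = M₂ * |y| + M₂ * |y| by ring, exp_add]; ring

/-- Lipschitz estimate in `x` of the reciprocal of the `x`-derivative of the flow: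
`|exp(−∫₀^y σ'(h(x₁,s))ds) − exp(−∫₀^y σ'(h(x₂,s))ds)| ≤ M₃|y| exp(2M₂|y|)|x₁ − x₂|`. -/
theorem flow_inv_lipschitz_x
    (σ : ℝ → ℝ) (h : ℝ → ℝ → ℝ) (M₂ M₃ M₅ : ℝ)
    (hM₂ : 0 < M₂) (hM₃ : 0 < M₃) (hM₅ : 0 < M₅)
    (hσ : ContDiff ℝ 2 σ)
    (hσb : ∀ x, |σ x| ≤ M₅)
    (hσ'b : ∀ x, |deriv σ x| ≤ M₂)
    (hσ''b : ∀ x, |deriv (deriv σ) x| ≤ M₃)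
    (hh0 : ∀ x, h x 0 = x)
    (hhy : ∀ x y, HasDerivAt (fun y => h x y) (σ (h x y)) y)
    (hhx : ∀ x y, HasDerivAt (fun x => h x y)
      (Real.exp (∫ s in (0:ℝ)..y, deriv σ (h x s))) x) :
    ∀ x₁ x₂ y : ℝ,
      |Real.exp (-∫ s in (0:ℝ)..y, deriv σ (h x₁ s)) -
        Real.exp (-∫ s in (0:ℝ)..y, deriv σ (h x₂ s))| ≤
        M₃ * |y| * Real.exp (2 * M₂ * |y|) * |x₁ - x₂| :=
  flow_inv_lipschitz_x_general σ h M₂ M₃ hσ hσ'b hσ''b hhy hhx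
end

section
/- Let h be the flow of σ and b as in the context, and define f(x,y) = exp(−∫₀^y σ'(h(x,u)) du) · b(h(x,y)). Then for every R > 0 and all x, y₁, y₂ ∈ ℝ with |y₁| ≤ R and |y₂| ≤ R, |f(x,y₁) − f(x,y₂)| ≤ (M₁ M₂ + M₅ M₄) exp(M₂ R) |y₁ − y₂|. -/
/-!
Along a trajectory `φ = h x` of `φ' = σ(φ)`, the field is
`y ↦ exp(-∫₀^y σ'(φ)) b(φ y)`, whose derivative is
`exp(-∫₀^y σ'(φ)) (b'(φ y) σ(φ y) - σ'(φ y) b(φ y))`.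
On `[-R, R]` the exponential factor is at most `exp(M₂ R)` and the bracket at most
`M₁ M₂ + M₅ M₄`, so the mean value inequality gives the Lipschitz bound.
-/

open Real Set

lemma exp_neg_integral_le {c : ℝ → ℝ} {M R y : ℝ} (hc : ∀ u, |c u| ≤ M) (hy : |y| ≤ R) :
    exp (-∫ u in (0 : ℝ)..y, c u) ≤ exp (M * R) := by
  have hM : 0 ≤ M := (abs_nonneg _).trans (hc 0)
  have hint : |∫ u in (0 : ℝ)..y, c u| ≤ M * |y| := by
    simpa using intervalIntegral.norm_integral_le_of_norm_le_const (a := 0) (b := y) (f := c)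
      fun u _ => hc u
  gcongr
  calc -∫ u in (0 : ℝ)..y, c u ≤ |∫ u in (0 : ℝ)..y, c u| := neg_le_abs _
    _ ≤ M * |y| := hint
    _ ≤ M * R := by gcongr

noncomputable def dossField (σ b φ : ℝ → ℝ) (y : ℝ) : ℝ :=
  exp (-∫ u in (0 : ℝ)..y, deriv σ (φ u)) * b (φ y)

section

variable {σ b φ : ℝ → ℝ}

lemma hasDerivAt_dossField (hσ : Continuous (deriv σ)) (hb : Differentiable ℝ b)
    (hφ : ∀ y, HasDerivAt φ (σ (φ y)) y) (y : ℝ) :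
    HasDerivAt (dossField σ b φ)
      (exp (-∫ u in (0 : ℝ)..y, deriv σ (φ u)) *
        (deriv b (φ y) * σ (φ y) - deriv σ (φ y) * b (φ y))) y := by
  have hφc : Continuous φ := continuous_iff_continuousAt.2 fun y => (hφ y).continuousAt
  have hint : HasDerivAt (fun y => ∫ u in (0 : ℝ)..y, deriv σ (φ u)) (deriv σ (φ y)) y :=
    ((hσ.comp hφc).integral_hasStrictDerivAt 0 y).hasDerivAt
  have hbφ : HasDerivAt (fun y => b (φ y)) (deriv b (φ y) * σ (φ y)) y :=
    (hb (φ y)).hasDerivAt.comp y (hφ y)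
  exact (hint.fun_neg.exp.fun_mul hbφ).congr_deriv (by ring)

lemma abs_deriv_dossField_le {M₁ M₂ M₄ M₅ R y : ℝ} (hσb : ∀ x, |σ x| ≤ M₅)
    (hσ'b : ∀ x, |deriv σ x| ≤ M₂) (hbb : ∀ x, |b x| ≤ M₁) (hb'b : ∀ x, |deriv b x| ≤ M₄)
    (hy : |y| ≤ R) :
    |exp (-∫ u in (0 : ℝ)..y, deriv σ (φ u)) *
        (deriv b (φ y) * σ (φ y) - deriv σ (φ y) * b (φ y))| ≤
      (M₁ * M₂ + M₅ * M₄) * exp (M₂ * R) := by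
  have hbracket : |deriv b (φ y) * σ (φ y) - deriv σ (φ y) * b (φ y)| ≤ M₁ * M₂ + M₅ * M₄ :=
    calc _ ≤ |deriv b (φ y)| * |σ (φ y)| + |deriv σ (φ y)| * |b (φ y)| := by
          simpa only [abs_mul] using abs_sub (deriv b (φ y) * σ (φ y)) (deriv σ (φ y) * b (φ y))
      _ ≤ M₄ * M₅ + M₂ * M₁ := by
          gcongr
          exacts [(abs_nonneg _).trans (hb'b 0), hb'b _, hσb _,
            (abs_nonneg _).trans (hσ'b 0), hσ'b _, hbb _]
      _ = M₁ * M₂ + M₅ * M₄ := by ring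
  rw [abs_mul, abs_of_pos (exp_pos _), mul_comm]
  exact mul_le_mul hbracket (exp_neg_integral_le (fun u => hσ'b (φ u)) hy) (exp_pos _).le
    ((abs_nonneg _).trans hbracket)

lemma abs_dossField_sub_le {M₁ M₂ M₄ M₅ R y₁ y₂ : ℝ} (hσ : Continuous (deriv σ))
    (hb : Differentiable ℝ b) (hφ : ∀ y, HasDerivAt φ (σ (φ y)) y)
    (hσb : ∀ x, |σ x| ≤ M₅) (hσ'b : ∀ x, |deriv σ x| ≤ M₂) (hbb : ∀ x, |b x| ≤ M₁)
    (hb'b : ∀ x, |deriv b x| ≤ M₄) (hy₁ : |y₁| ≤ R) (hy₂ : |y₂| ≤ R) :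
    |dossField σ b φ y₁ - dossField σ b φ y₂| ≤
      (M₁ * M₂ + M₅ * M₄) * exp (M₂ * R) * |y₁ - y₂| := by
  have hmem : ∀ {y : ℝ}, |y| ≤ R → y ∈ Icc (-R) R := fun hy => abs_le.1 hy
  simpa only [Real.norm_eq_abs] using
    (convex_Icc (-R) R).norm_image_sub_le_of_norm_hasDerivWithin_le
    (fun y _ => (hasDerivAt_dossField hσ hb hφ y).hasDerivWithinAt)
    (fun y hy => abs_deriv_dossField_le hσb hσ'b hbb hb'b (abs_le.2 hy)) (hmem hy₂) (hmem hy₁)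

end

theorem doss_field_lipschitz_y_general
    (σ b : ℝ → ℝ) (h : ℝ → ℝ → ℝ) (M₁ M₂ M₄ M₅ : ℝ)
    (hσ : ContDiff ℝ 2 σ)
    (hσb : ∀ x, |σ x| ≤ M₅)
    (hσ'b : ∀ x, |deriv σ x| ≤ M₂)
    (hb : ContDiff ℝ 1 b)
    (hbb : ∀ x, |b x| ≤ M₁)
    (hb'b : ∀ x, |deriv b x| ≤ M₄)
    (hhy : ∀ x y, HasDerivAt (fun y => h x y) (σ (h x y)) y)
    (f : ℝ → ℝ → ℝ)
    (hf : ∀ x y, f x y = Real.exp (-∫ u in (0:ℝ)..y, deriv σ (h x u)) * b (h x y)) :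
    ∀ R : ℝ, 0 < R → ∀ x y₁ y₂ : ℝ, |y₁| ≤ R → |y₂| ≤ R →
      |f x y₁ - f x y₂| ≤ (M₁ * M₂ + M₅ * M₄) * Real.exp (M₂ * R) * |y₁ - y₂| := by
  intro R _ x y₁ y₂ hy₁ hy₂
  rw [hf, hf]
  exact abs_dossField_sub_le (φ := h x) (hσ.continuous_deriv one_le_two)
    (hb.differentiable one_ne_zero) (hhy x) hσb hσ'b hbb hb'b hy₁ hy₂

/-- Local Lipschitz estimate in `y` of the Doss–Sussmann field
`f(x,y) = exp(−∫₀^y σ'(h(x,u))du) b(h(x,y))`: for `|y₁|, |y₂| ≤ R`,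
`|f(x,y₁) − f(x,y₂)| ≤ (M₁M₂ + M₅M₄) exp(M₂ R) |y₁ − y₂|`. -/
theorem doss_field_lipschitz_y
    (σ b : ℝ → ℝ) (h : ℝ → ℝ → ℝ) (M₁ M₂ M₃ M₄ M₅ : ℝ)
    (hM₁ : 0 < M₁) (hM₂ : 0 < M₂) (hM₃ : 0 < M₃) (hM₄ : 0 < M₄) (hM₅ : 0 < M₅)
    (hσ : ContDiff ℝ 2 σ)
    (hσb : ∀ x, |σ x| ≤ M₅)
    (hσ'b : ∀ x, |deriv σ x| ≤ M₂)
    (hσ''b : ∀ x, |deriv (deriv σ) x| ≤ M₃)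
    (hb : ContDiff ℝ 1 b)
    (hbb : ∀ x, |b x| ≤ M₁)
    (hb'b : ∀ x, |deriv b x| ≤ M₄)
    (hh0 : ∀ x, h x 0 = x)
    (hhy : ∀ x y, HasDerivAt (fun y => h x y) (σ (h x y)) y)
    (hhx : ∀ x y, HasDerivAt (fun x => h x y)
      (Real.exp (∫ s in (0:ℝ)..y, deriv σ (h x s))) x)
    (f : ℝ → ℝ → ℝ)
    (hf : ∀ x y, f x y = Real.exp (-∫ u in (0:ℝ)..y, deriv σ (h x u)) * b (h x y)) :
    ∀ R : ℝ, 0 < R → ∀ x y₁ y₂ : ℝ, |y₁| ≤ R → |y₂| ≤ R →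
      |f x y₁ - f x y₂| ≤ (M₁ * M₂ + M₅ * M₄) * Real.exp (M₂ * R) * |y₁ - y₂| :=
  doss_field_lipschitz_y_general σ b h M₁ M₂ M₄ M₅ hσ hσb hσ'b hb hbb hb'b hhy f hf
end

section
/- Let h be the flow of σ as in the context, let n, l be positive integers with l > n, and let hˡ be the Euler approximation of h on [−n,n] × [−n,n] defined in the context with step 1/l. Then for all (x,y) ∈ [−n,n] × [−n,n], |h(x,y) − hˡ(x,y)| ≤ M̄² (n/l) exp(M̄ n), where M̄ = max{M₂, M₅}. -/
/-!
On a cell `[a, a + δ]` the flow `f` moves by at most `M δ`, so its slope `σ (f s)` stays within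
`M (M δ + |f a - c|)` of the constant slope `σ c` used by the Euler polygon started at `c`. Hence the
node errors obey `e_{k+1} ≤ (1 + M/l) e_k + (M/l)²`, and this discrete Gronwall recursion gives
`e_k ≤ (M/l)² k (1 + M/l)^k ≤ M² (n/l) exp (M n)` for `k ≤ n l`. Negative times reduce to positive
ones under `y ↦ -y`, which turns the backward scheme for `σ` into the forward scheme for `-σ`.
-/

open Set

def IsEulerPolygon (σ : ℝ → ℝ) (l : ℝ) (N : ℕ) (g : ℝ → ℝ) : Prop :=
  ∀ k < N, ∀ y ∈ Icc ((k : ℝ) / l) ((k + 1) / l),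
    g y = g (k / l) + (y - k / l) * σ (g (k / l))

section EulerPolygon

variable {σ g : ℝ → ℝ} {l : ℝ} {N : ℕ}

theorem isEulerPolygon_of_step
    (step : ∀ k : ℕ, k < N →
      g (((k : ℝ) + 1) / l) = g ((k : ℝ) / l) + (1 / l) * σ (g ((k : ℝ) / l)))
    (interp : ∀ k : ℕ, k < N → ∀ y : ℝ, (k : ℝ) / l ≤ y → y < ((k : ℝ) + 1) / l →
      g y = g ((k : ℝ) / l) + (y - (k : ℝ) / l) * σ (g ((k : ℝ) / l))) :
    IsEulerPolygon σ l N g := by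
  rintro k hk y ⟨hy₁, hy₂⟩
  rcases hy₂.lt_or_eq with hy₂ | rfl
  · exact interp k hk y hy₁ hy₂
  · rw [step k hk]
    ring

theorem isEulerPolygon_neg_of_step
    (step : ∀ k : ℕ, k < N →
      g (-(((k : ℝ) + 1) / l)) = g (-((k : ℝ) / l)) - (1 / l) * σ (g (-((k : ℝ) / l))))
    (interp : ∀ k : ℕ, k < N → ∀ y : ℝ, -(((k : ℝ) + 1) / l) < y → y ≤ -((k : ℝ) / l) →
      g y = g (-((k : ℝ) / l)) - (-((k : ℝ) / l) - y) * σ (g (-((k : ℝ) / l)))) :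
    IsEulerPolygon (fun t => -σ t) l N (fun s => g (-s)) :=
  isEulerPolygon_of_step
    (fun k hk => by
      rw [step k hk]
      ring)
    (fun k hk y hy₁ hy₂ => by
      rw [interp k hk (-y) (by linarith) (by linarith)]
      ring)

end EulerPolygon

theorem abs_sub_le_of_hasDerivAt {φ φ' : ℝ → ℝ} {C : ℝ} (hφ : ∀ t, HasDerivAt φ (φ' t) t)
    (hφ' : ∀ t, |φ' t| ≤ C) (a b : ℝ) : |φ a - φ b| ≤ C * |a - b| :=
  convex_univ.norm_image_sub_le_of_norm_hasDerivWithin_le (fun t _ => (hφ t).hasDerivWithinAt)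
    (fun t _ => hφ' t) (mem_univ b) (mem_univ a)

theorem exists_nat_lt_and_cast_le_le_add_one {s : ℝ} {N : ℕ} (hN : 0 < N) (hs₀ : 0 ≤ s) (hsN : s ≤ N) :
    ∃ k < N, (k : ℝ) ≤ s ∧ s ≤ k + 1 := by
  by_cases hfloor : ⌊s⌋₊ < N
  · exact ⟨⌊s⌋₊, hfloor, Nat.floor_le hs₀, (Nat.lt_floor_add_one s).le⟩
  · refine ⟨N - 1, Nat.sub_lt hN one_pos, ?_, by rw [Nat.cast_pred hN]; linarith⟩
    have : (N : ℝ) ≤ s := (Nat.cast_le.2 (not_lt.1 hfloor)).trans (Nat.floor_le hs₀)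
    rw [Nat.cast_pred hN]
    linarith

theorem le_mul_succ_mul_pow_succ_of_le {q r e t : ℝ} {k : ℕ} (hq : 0 ≤ q) (hr : 0 ≤ r)
    (he : e ≤ r * k * (1 + q) ^ k) (ht : t ≤ (1 + q) * e + r) :
    t ≤ r * (k + 1) * (1 + q) ^ (k + 1) := by
  have hpow : 1 ≤ (1 + q) ^ (k + 1) := one_le_pow₀ (by linarith)
  calc t ≤ (1 + q) * (r * k * (1 + q) ^ k) + r := ht.trans (by gcongr)
    _ = r * k * (1 + q) ^ (k + 1) + r * 1 := by ring
    _ ≤ r * k * (1 + q) ^ (k + 1) + r * (1 + q) ^ (k + 1) := by gcongr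
    _ = r * (k + 1) * (1 + q) ^ (k + 1) := by ring

theorem sq_div_mul_mul_one_add_div_pow_le_mul_exp {M l n : ℝ} {m : ℕ} (hM : 0 ≤ M) (hl : 0 < l)
    (hm : (m : ℝ) ≤ n * l) :
    (M / l) ^ 2 * m * (1 + M / l) ^ m ≤ M ^ 2 * (n / l) * Real.exp (M * n) := by
  have hml : (m : ℝ) / l ≤ n := (div_le_iff₀ hl).2 hm
  have hpow : (1 + M / l) ^ m ≤ Real.exp (M * n) :=
    calc (1 + M / l) ^ m ≤ Real.exp (M / l) ^ m := by
          gcongr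
          linarith [Real.add_one_le_exp (M / l)]
      _ = Real.exp (M * (m / l)) := by rw [← Real.exp_nat_mul]; ring_nf
      _ ≤ Real.exp (M * n) := by gcongr
  have hcoeff : (M / l) ^ 2 * m ≤ M ^ 2 * (n / l) :=
    calc (M / l) ^ 2 * m = M ^ 2 * ((m / l) / l) := by ring
      _ ≤ M ^ 2 * (n / l) := by gcongr
  exact mul_le_mul hcoeff hpow (by positivity) ((by positivity : (0 : ℝ) ≤ _).trans hcoeff)

section Flow

variable {σ f g : ℝ → ℝ} {M l : ℝ} {N : ℕ}

theorem abs_flow_sub_eulerStep_le (hσb : ∀ t, |σ t| ≤ M)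
    (hσlip : ∀ a b, |σ a - σ b| ≤ M * |a - b|) (hf : ∀ t, HasDerivAt f (σ (f t)) t)
    (c : ℝ) {a y : ℝ} (hay : a ≤ y) :
    |f y - (c + (y - a) * σ c)| ≤ (1 + M * (y - a)) * |f a - c| + M ^ 2 * (y - a) ^ 2 := by
  have hM : 0 ≤ M := (abs_nonneg _).trans (hσb 0)
  have hF : ∀ s, HasDerivAt (fun s => f s - (c + (s - a) * σ c)) (σ (f s) - σ c) s := fun s =>
    (hf s).sub <| by simpa using (((hasDerivAt_id s).sub_const a).mul_const (σ c)).const_add c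
  have hslope : ∀ s ∈ Icc a y, ‖σ (f s) - σ c‖ ≤ M * (M * (y - a) + |f a - c|) := by
    rintro s ⟨has, hsy⟩
    have hfs : |f s - f a| ≤ M * (y - a) :=
      calc |f s - f a| ≤ M * |s - a| := abs_sub_le_of_hasDerivAt hf (fun t => hσb (f t)) s a
        _ ≤ M * (y - a) := by rw [abs_of_nonneg (sub_nonneg.2 has)]; gcongr
    calc ‖σ (f s) - σ c‖ ≤ M * |f s - c| := hσlip _ _
      _ ≤ M * (|f s - f a| + |f a - c|) := by gcongr; exact abs_sub_le _ _ _
      _ ≤ M * (M * (y - a) + |f a - c|) := by gcongr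
  have hvar := (convex_Icc a y).norm_image_sub_le_of_norm_hasDerivWithin_le
    (fun s _ => (hF s).hasDerivWithinAt) hslope (left_mem_Icc.2 hay) (right_mem_Icc.2 hay)
  rw [Real.norm_eq_abs, Real.norm_eq_abs, abs_of_nonneg (sub_nonneg.2 hay)] at hvar
  calc |f y - (c + (y - a) * σ c)|
      ≤ |f a - (c + (a - a) * σ c)| + M * (M * (y - a) + |f a - c|) * (y - a) := by
        linarith [abs_sub_abs_le_abs_sub (f y - (c + (y - a) * σ c)) (f a - (c + (a - a) * σ c))]
    _ = (1 + M * (y - a)) * |f a - c| + M ^ 2 * (y - a) ^ 2 := by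
        rw [sub_self, zero_mul, add_zero]
        ring

theorem abs_flow_sub_eulerPolygon_le_on_cell (hσb : ∀ t, |σ t| ≤ M)
    (hσlip : ∀ a b, |σ a - σ b| ≤ M * |a - b|) (hf : ∀ t, HasDerivAt f (σ (f t)) t)
    (hl : 0 < l) (hg : IsEulerPolygon σ l N g) {k : ℕ} (hk : k < N)
    (he : |f (k / l) - g (k / l)| ≤ (M / l) ^ 2 * k * (1 + M / l) ^ k)
    {y : ℝ} (hy : y ∈ Icc ((k : ℝ) / l) ((k + 1) / l)) :
    |f y - g y| ≤ (M / l) ^ 2 * (k + 1) * (1 + M / l) ^ (k + 1) := by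
  have hM : 0 ≤ M := (abs_nonneg _).trans (hσb 0)
  have hδ₀ : 0 ≤ y - k / l := sub_nonneg.2 hy.1
  have hδ : y - k / l ≤ 1 / l := by
    have : ((k : ℝ) + 1) / l = k / l + 1 / l := by ring
    linarith [hy.2]
  refine le_mul_succ_mul_pow_succ_of_le (by positivity) (by positivity) he ?_
  rw [hg k hk y hy]
  calc _ ≤ (1 + M * (y - k / l)) * |f (k / l) - g (k / l)| + M ^ 2 * (y - k / l) ^ 2 :=
        abs_flow_sub_eulerStep_le hσb hσlip hf _ hy.1
    _ ≤ (1 + M * (1 / l)) * |f (k / l) - g (k / l)| + M ^ 2 * (1 / l) ^ 2 := by gcongr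
    _ = (1 + M / l) * |f (k / l) - g (k / l)| + (M / l) ^ 2 := by ring

theorem abs_flow_sub_eulerPolygon_node_le (hσb : ∀ t, |σ t| ≤ M)
    (hσlip : ∀ a b, |σ a - σ b| ≤ M * |a - b|) (hf : ∀ t, HasDerivAt f (σ (f t)) t)
    (hl : 0 < l) (hg : IsEulerPolygon σ l N g) (hg0 : g 0 = f 0) :
    ∀ k ≤ N, |f (k / l) - g (k / l)| ≤ (M / l) ^ 2 * k * (1 + M / l) ^ k
  | 0, _ => by simp [hg0]
  | k + 1, hk => by
    push_cast
    exact abs_flow_sub_eulerPolygon_le_on_cell hσb hσlip hf hl hg hk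
      (abs_flow_sub_eulerPolygon_node_le hσb hσlip hf hl hg hg0 k (Nat.le_of_succ_le hk))
      ⟨by gcongr; linarith, le_rfl⟩

theorem abs_flow_sub_eulerPolygon_le {n l : ℕ} (hσb : ∀ t, |σ t| ≤ M)
    (hσlip : ∀ a b, |σ a - σ b| ≤ M * |a - b|) (hf : ∀ t, HasDerivAt f (σ (f t)) t)
    (hn : 0 < n) (hl : 0 < l) (hg : IsEulerPolygon σ l (n * l) g) (hg0 : g 0 = f 0)
    {y : ℝ} (hy₀ : 0 ≤ y) (hyn : y ≤ n) :
    |f y - g y| ≤ M ^ 2 * (n / l) * Real.exp (M * n) := by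
  have hM : 0 ≤ M := (abs_nonneg _).trans (hσb 0)
  have hl' : (0 : ℝ) < l := Nat.cast_pos.2 hl
  obtain ⟨k, hk, hky, hyk⟩ := exists_nat_lt_and_cast_le_le_add_one (Nat.mul_pos hn hl) (s := y * l) (by positivity)
    (by push_cast; gcongr)
  have hcell : y ∈ Icc ((k : ℝ) / l) ((k + 1) / l) :=
    ⟨(div_le_iff₀ hl').2 hky, (le_div_iff₀ hl').2 hyk⟩
  calc |f y - g y| ≤ (M / l) ^ 2 * (k + 1) * (1 + M / l) ^ (k + 1) :=
        abs_flow_sub_eulerPolygon_le_on_cell hσb hσlip hf hl' hg hk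
          (abs_flow_sub_eulerPolygon_node_le hσb hσlip hf hl' hg hg0 k hk.le) hcell
    _ ≤ M ^ 2 * (n / l) * Real.exp (M * n) := by
        exact_mod_cast sq_div_mul_mul_one_add_div_pow_le_mul_exp hM hl'
          (m := k + 1) (by exact_mod_cast hk)

theorem abs_flow_sub_eulerPolygon_le_of_abs_le {n l : ℕ} (hσb : ∀ t, |σ t| ≤ M)
    (hσlip : ∀ a b, |σ a - σ b| ≤ M * |a - b|) (hf : ∀ t, HasDerivAt f (σ (f t)) t)
    (hn : 0 < n) (hl : 0 < l) (hg : IsEulerPolygon σ l (n * l) g)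
    (hg' : IsEulerPolygon (fun t => -σ t) l (n * l) (fun s => g (-s))) (hg0 : g 0 = f 0)
    {y : ℝ} (hy : |y| ≤ n) :
    |f y - g y| ≤ M ^ 2 * (n / l) * Real.exp (M * n) := by
  obtain ⟨hny, hyn⟩ := abs_le.1 hy
  rcases le_total 0 y with hy₀ | hy₀
  · exact abs_flow_sub_eulerPolygon_le hσb hσlip hf hn hl hg hg0 hy₀ hyn
  · have hf' : ∀ s, HasDerivAt (fun s => f (-s)) (-σ (f (-s))) s := fun s => by
      simpa [Function.comp_def] using (hf (-s)).comp s (hasDerivAt_neg s)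
    simpa using abs_flow_sub_eulerPolygon_le (σ := fun t => -σ t) (by simpa using hσb)
      (fun a b => by rw [neg_sub_neg, abs_sub_comm]; exact hσlip a b) hf' hn hl hg'
      (by simpa using hg0) (neg_nonneg.2 hy₀) (by linarith)

end Flow

theorem euler_flow_approx_general
    (σ : ℝ → ℝ) (h : ℝ → ℝ → ℝ) (M₂ M₅ : ℝ)
    (hσ : ContDiff ℝ 2 σ)
    (hσb : ∀ x, |σ x| ≤ M₅)
    (hσ'b : ∀ x, |deriv σ x| ≤ M₂)
    (hh0 : ∀ x, h x 0 = x)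
    (hhy : ∀ x y, HasDerivAt (fun y => h x y) (σ (h x y)) y)
    (n l : ℕ) (hn : 0 < n) (hnl : n < l)
    (hE : ℝ → ℝ → ℝ)
    -- defining relations of the Euler scheme on the grid `y_k = k/l`, `|k| ≤ n·l`
    (hE0 : ∀ x : ℝ, |x| ≤ (n : ℝ) → hE x 0 = x)
    (hEstep : ∀ x : ℝ, |x| ≤ (n : ℝ) → ∀ k : ℕ, k < n * l →
      hE x (((k : ℝ) + 1) / l) =
        hE x ((k : ℝ) / l) + (1 / l) * σ (hE x ((k : ℝ) / l)))
    (hEstep' : ∀ x : ℝ, |x| ≤ (n : ℝ) → ∀ k : ℕ, k < n * l →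
      hE x (-(((k : ℝ) + 1) / l)) =
        hE x (-((k : ℝ) / l)) - (1 / l) * σ (hE x (-((k : ℝ) / l))))
    (hEinterp : ∀ x : ℝ, |x| ≤ (n : ℝ) → ∀ k : ℕ, k < n * l → ∀ y : ℝ,
      (k : ℝ) / l ≤ y → y < ((k : ℝ) + 1) / l →
      hE x y = hE x ((k : ℝ) / l) + (y - (k : ℝ) / l) * σ (hE x ((k : ℝ) / l)))
    (hEinterp' : ∀ x : ℝ, |x| ≤ (n : ℝ) → ∀ k : ℕ, k < n * l → ∀ y : ℝ,
      -(((k : ℝ) + 1) / l) < y → y ≤ -((k : ℝ) / l) →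
      hE x y = hE x (-((k : ℝ) / l)) - (-((k : ℝ) / l) - y) * σ (hE x (-((k : ℝ) / l)))) :
    ∀ x y : ℝ, |x| ≤ (n : ℝ) → |y| ≤ (n : ℝ) →
      |h x y - hE x y| ≤
        (max M₂ M₅) ^ 2 * ((n : ℝ) / l) * Real.exp (max M₂ M₅ * n) := by
  have hσbM : ∀ t, |σ t| ≤ max M₂ M₅ := fun t => (hσb t).trans (le_max_right _ _)
  have hσlip : ∀ a b, |σ a - σ b| ≤ max M₂ M₅ * |a - b| :=
    abs_sub_le_of_hasDerivAt (fun t => (hσ.differentiable two_ne_zero t).hasDerivAt)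
      (fun t => (hσ'b t).trans (le_max_left _ _))
  intro x y hx hy
  exact abs_flow_sub_eulerPolygon_le_of_abs_le hσbM hσlip (hhy x) hn (hn.trans hnl)
    (isEulerPolygon_of_step (hEstep x hx) (hEinterp x hx))
    (isEulerPolygon_neg_of_step (hEstep' x hx) (hEinterp' x hx))
    (by rw [hE0 x hx, hh0 x]) hy

/-- Error bound for the Euler approximation `hE` (with step `1/l`) of the flow `h` of `σ`
on the square `[−n,n] × [−n,n]`: `|h(x,y) − hE(x,y)| ≤ M̄² (n/l) exp(M̄ n)`,
where `M̄ = max{M₂, M₅}`. -/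
theorem euler_flow_approx
    (σ : ℝ → ℝ) (h : ℝ → ℝ → ℝ) (M₂ M₃ M₅ : ℝ)
    (hM₂ : 0 < M₂) (hM₃ : 0 < M₃) (hM₅ : 0 < M₅)
    (hσ : ContDiff ℝ 2 σ)
    (hσb : ∀ x, |σ x| ≤ M₅)
    (hσ'b : ∀ x, |deriv σ x| ≤ M₂)
    (hσ''b : ∀ x, |deriv (deriv σ) x| ≤ M₃)
    (hh0 : ∀ x, h x 0 = x)
    (hhy : ∀ x y, HasDerivAt (fun y => h x y) (σ (h x y)) y)
    (n l : ℕ) (hn : 0 < n) (hnl : n < l)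
    (hE : ℝ → ℝ → ℝ)
    -- defining relations of the Euler scheme on the grid `y_k = k/l`, `|k| ≤ n·l`
    (hE0 : ∀ x : ℝ, |x| ≤ (n : ℝ) → hE x 0 = x)
    (hEstep : ∀ x : ℝ, |x| ≤ (n : ℝ) → ∀ k : ℕ, k < n * l →
      hE x (((k : ℝ) + 1) / l) =
        hE x ((k : ℝ) / l) + (1 / l) * σ (hE x ((k : ℝ) / l)))
    (hEstep' : ∀ x : ℝ, |x| ≤ (n : ℝ) → ∀ k : ℕ, k < n * l →
      hE x (-(((k : ℝ) + 1) / l)) =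
        hE x (-((k : ℝ) / l)) - (1 / l) * σ (hE x (-((k : ℝ) / l))))
    (hEinterp : ∀ x : ℝ, |x| ≤ (n : ℝ) → ∀ k : ℕ, k < n * l → ∀ y : ℝ,
      (k : ℝ) / l ≤ y → y < ((k : ℝ) + 1) / l →
      hE x y = hE x ((k : ℝ) / l) + (y - (k : ℝ) / l) * σ (hE x ((k : ℝ) / l)))
    (hEinterp' : ∀ x : ℝ, |x| ≤ (n : ℝ) → ∀ k : ℕ, k < n * l → ∀ y : ℝ,
      -(((k : ℝ) + 1) / l) < y → y ≤ -((k : ℝ) / l) →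
      hE x y = hE x (-((k : ℝ) / l)) - (-((k : ℝ) / l) - y) * σ (hE x (-((k : ℝ) / l)))) :
    ∀ x y : ℝ, |x| ≤ (n : ℝ) → |y| ≤ (n : ℝ) →
      |h x y - hE x y| ≤
        (max M₂ M₅) ^ 2 * ((n : ℝ) / l) * Real.exp (max M₂ M₅ * n) :=
  euler_flow_approx_general σ h M₂ M₅ hσ hσb hσ'b hh0 hhy n l hn hnl hE hE0 hEstep hEstep' hEinterp
    hEinterp'
end

section
/- Let T > 0, L, D, Z₁, Z₂, E ≥ 0, let m be a positive integer, set r = T/m and t_k = k·r. Let w : [0,T] → ℝ satisfy |w(s) − w(t)| ≤ L|s − t| for all s, t ∈ [0,T]. Let f, f̃ : ℝ × ℝ → ℝ satisfy, for all relevant arguments: |f(x,y)| ≤ D and |f̃(x,y)| ≤ D; |f(x₁,y) − f(x₂,y)| ≤ Z₁|x₁ − x₂|; |f(x,y₁) − f(x,y₂)| ≤ Z₂|y₁ − y₂|; and |f(x,y) − f̃(x,y)| ≤ E. Let Y : [0,T] → ℝ be differentiable with Y(0) = x₀ and Y'(t) = f(Y(t), w(t)) for all t ∈ [0,T], and let Ŷ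 be the Euler polygon Ŷ(0) = x₀, Ŷ(t_{k+1}) = Ŷ(t_k) + r·f̃(Ŷ(t_k), w(t_k)), with Ŷ(t) = Ŷ(t_k) + (t − t_k)·f̃(Ŷ(t_k), w(t_k)) for t_k ≤ t < t_{k+1}. Then for all t ∈ [0,T], |Y(t) − Ŷ(t)| ≤ (Z₁ D r + Z₂ L r + E) · T · exp(Z₁ T). -/
/-!
On a grid cell `[t_k, t_k + r]` the error `e = Y − Ŷ` changes with derivative
`f(Y(s), w(s)) − f̃(Ŷ(t_k), w(t_k))`, which the Lipschitz and perturbation bounds control by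
`Z₁ |e(t_k)| + δ`, where `δ = Z₁ D r + Z₂ L r + E` accounts for the drift of `Y` and `w` within the
cell and for replacing `f` by `f̃`. The mean value inequality thus gives
`|e(t)| ≤ (1 + Z₁ r) |e(t_k)| + r δ` on the cell, and the discrete Grönwall inequality over the
`m` cells yields `|e(t)| ≤ m r δ exp(m Z₁ r) = δ T exp(Z₁ T)`.
-/

open Set Real

theorem norm_sub_sub_smul_le_of_hasDerivAt {F : Type*} [NormedAddCommGroup F] [NormedSpace ℝ F]
    {g g' : ℝ → F} {c : F} {a t B : ℝ} (hg : ∀ s ∈ Icc a t, HasDerivAt g (g' s) s)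
    (hbound : ∀ s ∈ Icc a t, ‖g' s - c‖ ≤ B) (hat : a ≤ t) :
    ‖g t - g a - (t - a) • c‖ ≤ B * (t - a) := by
  have hderiv : ∀ s ∈ Icc a t,
      HasDerivWithinAt (fun s => g s - s • c) (g' s - c) (Icc a t) s := fun s hs => by
    simpa using ((hg s hs).fun_sub ((hasDerivAt_id' s).smul_const c)).hasDerivWithinAt
  have hmv := (convex_Icc a t).norm_image_sub_le_of_norm_hasDerivWithin_le hderiv hbound
    (left_mem_Icc.2 hat) (right_mem_Icc.2 hat)
  rw [Real.norm_of_nonneg (sub_nonneg.2 hat)] at hmv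
  calc ‖g t - g a - (t - a) • c‖ = ‖g t - t • c - (g a - a • c)‖ := by
        rw [sub_smul]; congr 1; abel
    _ ≤ B * (t - a) := hmv

theorem abs_sub_perturbed_le {f f' : ℝ → ℝ → ℝ} {Z₁ Z₂ E : ℝ}
    (hfLx : ∀ x₁ x₂ y : ℝ, |f x₁ y - f x₂ y| ≤ Z₁ * |x₁ - x₂|)
    (hfLy : ∀ x y₁ y₂ : ℝ, |f x y₁ - f x y₂| ≤ Z₂ * |y₁ - y₂|)
    (hff' : ∀ x y : ℝ, |f x y - f' x y| ≤ E) (x₁ x₂ y₁ y₂ : ℝ) :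
    |f x₁ y₁ - f' x₂ y₂| ≤ Z₁ * |x₁ - x₂| + Z₂ * |y₁ - y₂| + E :=
  calc |f x₁ y₁ - f' x₂ y₂|
      ≤ |f x₁ y₁ - f x₂ y₁| + |f x₂ y₁ - f x₂ y₂| + |f x₂ y₂ - f' x₂ y₂| := by
        simpa using abs_add_three (f x₁ y₁ - f x₂ y₁) (f x₂ y₁ - f x₂ y₂) (f x₂ y₂ - f' x₂ y₂)
    _ ≤ Z₁ * |x₁ - x₂| + Z₂ * |y₁ - y₂| + E := by
        gcongr
        exacts [hfLx .., hfLy .., hff' ..]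

theorem abs_sub_euler_step_le {f f' : ℝ → ℝ → ℝ} {Y w : ℝ → ℝ} {D L Z₁ Z₂ E a t r : ℝ}
    (hL : 0 ≤ L) (hD : 0 ≤ D) (hZ₁ : 0 ≤ Z₁) (hZ₂ : 0 ≤ Z₂) (hE : 0 ≤ E)
    (hfD : ∀ x y : ℝ, |f x y| ≤ D)
    (hfLx : ∀ x₁ x₂ y : ℝ, |f x₁ y - f x₂ y| ≤ Z₁ * |x₁ - x₂|)
    (hfLy : ∀ x y₁ y₂ : ℝ, |f x y₁ - f x y₂| ≤ Z₂ * |y₁ - y₂|)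
    (hff' : ∀ x y : ℝ, |f x y - f' x y| ≤ E)
    (hw : ∀ s ∈ Icc a t, |w s - w a| ≤ L * |s - a|)
    (hY : ∀ s ∈ Icc a t, HasDerivAt Y (f (Y s) (w s)) s)
    (hat : a ≤ t) (htr : t - a ≤ r) (x : ℝ) :
    |Y t - (x + (t - a) * f' x (w a))| ≤
      (1 + Z₁ * r) * |Y a - x| + r * (Z₁ * D * r + Z₂ * L * r + E) := by
  set δ := Z₁ * D * r + Z₂ * L * r + E
  set c := f' x (w a)
  have hgrowth : ∀ s ∈ Icc a t, |Y s - Y a| ≤ D * (s - a) := fun s hs => by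
    simpa using norm_sub_sub_smul_le_of_hasDerivAt (c := (0 : ℝ))
      (fun u hu => hY u ⟨hu.1, hu.2.trans hs.2⟩) (fun u _ => by simpa using hfD _ _) hs.1
  have hfield : ∀ s ∈ Icc a t, ‖f (Y s) (w s) - c‖ ≤ Z₁ * |Y a - x| + δ := fun s hs => by
    have hsa : 0 ≤ s - a := sub_nonneg.2 hs.1
    have hsr : s - a ≤ r := by linarith [hs.2]
    calc ‖f (Y s) (w s) - c‖ ≤ Z₁ * |Y s - x| + Z₂ * |w s - w a| + E :=
          abs_sub_perturbed_le hfLx hfLy hff' ..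
      _ ≤ Z₁ * (D * (s - a) + |Y a - x|) + Z₂ * (L * (s - a)) + E := by
          gcongr
          · exact (abs_sub_le _ _ _).trans (add_le_add_left (hgrowth s hs) _)
          · simpa [abs_of_nonneg hsa] using hw s hs
      _ ≤ Z₁ * |Y a - x| + δ := by
          have := mul_le_mul_of_nonneg_left hsr (add_nonneg (mul_nonneg hZ₁ hD) (mul_nonneg hZ₂ hL))
          linarith
  have hmv := norm_sub_sub_smul_le_of_hasDerivAt hY hfield hat
  rw [Real.norm_eq_abs, smul_eq_mul] at hmv
  have hB : 0 ≤ Z₁ * |Y a - x| + δ := by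
    have hr : 0 ≤ r := by linarith
    positivity
  calc |Y t - (x + (t - a) * c)| = |(Y a - x) + (Y t - Y a - (t - a) * c)| := by ring_nf
    _ ≤ |Y a - x| + |Y t - Y a - (t - a) * c| := abs_add_le _ _
    _ ≤ |Y a - x| + (Z₁ * |Y a - x| + δ) * r := by
        gcongr
        exact hmv.trans (mul_le_mul_of_nonneg_left htr hB)
    _ = (1 + Z₁ * r) * |Y a - x| + r * δ := by ring

theorem discrete_gronwall_of_step_on_grid {e : ℝ → ℝ} {r t K b : ℝ} {m : ℕ} (hr : 0 ≤ r)
    (hK : 0 ≤ K) (hb : 0 ≤ b) (he : ∀ s, 0 ≤ e s) (ht : t ∈ Icc 0 (m * r))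
    (hstep : ∀ n < m, ∀ s ∈ Icc (n * r) ((n + 1) * r), e s ≤ (1 + K) * e (n * r) + b) :
    e t ≤ (e 0 + m * b) * exp (m * K) := by
  -- the grid points clamped at `t`: the Grönwall recursion becomes trivial once they reach `t`
  set u : ℕ → ℝ := fun n => e (min (n * r) t)
  have hu : ∀ n ≥ 0, u (n + 1) ≤ (1 + K) * u n + b := by
    intro n _
    rcases lt_or_ge (n * r) t with hnt | htn
    · have hnm : n < m := by exact_mod_cast lt_of_mul_lt_mul_right (hnt.trans_le ht.2) hr
      have hmin : min (↑(n + 1) * r) t ∈ Icc (n * r) ((n + 1) * r) := by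
        push_cast
        exact ⟨le_min (by nlinarith) hnt.le, min_le_left _ _⟩
      simpa [u, min_eq_left hnt.le] using hstep n hnm _ hmin
    · have htn' : t ≤ ↑(n + 1) * r := htn.trans (by push_cast; nlinarith)
      simp only [u, min_eq_right htn, min_eq_right htn']
      nlinarith [he t]
  have hmain := discrete_gronwall (he _) hu (fun _ _ => hK) (fun _ _ => hb) (Nat.zero_le m)
  simpa [u, min_eq_right ht.2, ht.1] using hmain

theorem euler_scheme_error_general
    (T L D Z₁ Z₂ E : ℝ) (hT : 0 < T)
    (hL : 0 ≤ L) (hD : 0 ≤ D) (hZ₁ : 0 ≤ Z₁) (hZ₂ : 0 ≤ Z₂) (hE : 0 ≤ E)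
    (m : ℕ) (hm : 0 < m) (x₀ : ℝ)
    (w : ℝ → ℝ)
    (hw : ∀ s ∈ Set.Icc (0 : ℝ) T, ∀ t ∈ Set.Icc (0 : ℝ) T, |w s - w t| ≤ L * |s - t|)
    (f f' : ℝ → ℝ → ℝ)
    (hfD : ∀ x y : ℝ, |f x y| ≤ D)
    (hfLx : ∀ x₁ x₂ y : ℝ, |f x₁ y - f x₂ y| ≤ Z₁ * |x₁ - x₂|)
    (hfLy : ∀ x y₁ y₂ : ℝ, |f x y₁ - f x y₂| ≤ Z₂ * |y₁ - y₂|)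
    (hff' : ∀ x y : ℝ, |f x y - f' x y| ≤ E)
    (Y : ℝ → ℝ)
    (hY0 : Y 0 = x₀)
    (hYode : ∀ t ∈ Set.Icc (0 : ℝ) T, HasDerivAt Y (f (Y t) (w t)) t)
    (Yh : ℝ → ℝ)
    (hYh0 : Yh 0 = x₀)
    (hYhstep : ∀ k : ℕ, k < m →
      Yh (((k : ℝ) + 1) * (T / m)) =
        Yh ((k : ℝ) * (T / m)) +
          (T / m) * f' (Yh ((k : ℝ) * (T / m))) (w ((k : ℝ) * (T / m))))
    (hYhinterp : ∀ k : ℕ, k < m → ∀ t : ℝ,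
      (k : ℝ) * (T / m) ≤ t → t < ((k : ℝ) + 1) * (T / m) →
      Yh t = Yh ((k : ℝ) * (T / m)) +
        (t - (k : ℝ) * (T / m)) * f' (Yh ((k : ℝ) * (T / m))) (w ((k : ℝ) * (T / m)))) :
    ∀ t ∈ Set.Icc (0 : ℝ) T,
      |Y t - Yh t| ≤ (Z₁ * D * (T / m) + Z₂ * L * (T / m) + E) * T * Real.exp (Z₁ * T) := by
  intro t ht
  set r := T / m
  have hr : 0 ≤ r := by positivity
  have hmr : m * r = T := mul_div_cancel₀ T (by positivity)
  set δ := Z₁ * D * r + Z₂ * L * r + E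
  have hcell : ∀ n < m, Icc (n * r) ((n + 1) * r) ⊆ Icc 0 T := fun n hn =>
    Icc_subset_Icc (by positivity) (hmr ▸ by gcongr; exact_mod_cast hn)
  have hpolygon : ∀ n < m, ∀ s ∈ Icc (n * r) ((n + 1) * r),
      Yh s = Yh (n * r) + (s - n * r) * f' (Yh (n * r)) (w (n * r)) := by
    rintro n hn s ⟨hns, hsn⟩
    rcases hsn.lt_or_eq with hsn | rfl
    · exact hYhinterp n hn s hns hsn
    · rw [hYhstep n hn]; ring_nf
  have hstep : ∀ n < m, ∀ s ∈ Icc (n * r) ((n + 1) * r),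
      |Y s - Yh s| ≤ (1 + Z₁ * r) * |Y (n * r) - Yh (n * r)| + r * δ := by
    intro n hn s hs
    have hsub : Icc (n * r) s ⊆ Icc 0 T := (Icc_subset_Icc_right hs.2).trans (hcell n hn)
    rw [hpolygon n hn s hs]
    exact abs_sub_euler_step_le hL hD hZ₁ hZ₂ hE hfD hfLx hfLy hff'
      (fun u hu => hw u (hsub hu) _ (hsub (left_mem_Icc.2 hs.1)))
      (fun u hu => hYode u (hsub hu)) hs.1 (by linarith [hs.2]) _
  have hgronwall := discrete_gronwall_of_step_on_grid (e := fun s => |Y s - Yh s|) hr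
    (by positivity) (by positivity) (fun _ => abs_nonneg _) (hmr ▸ ht) hstep
  calc |Y t - Yh t| ≤ (0 + m * (r * δ)) * exp (m * (Z₁ * r)) := by
        simpa [hY0, hYh0] using hgronwall
    _ = _ := by rw [← hmr]; ring_nf

/-- Error bound for the Euler polygon approximation (with perturbed field `f̃` and
Lipschitz driving path `w`) of the ODE `Y' = f(Y, w)`:
`|Y(t) − Ŷ(t)| ≤ (Z₁ D r + Z₂ L r + E) T exp(Z₁ T)` for all `t ∈ [0,T]`. -/
theorem euler_scheme_error
    (T L D Z₁ Z₂ E : ℝ) (hT : 0 < T)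
    (hL : 0 ≤ L) (hD : 0 ≤ D) (hZ₁ : 0 ≤ Z₁) (hZ₂ : 0 ≤ Z₂) (hE : 0 ≤ E)
    (m : ℕ) (hm : 0 < m) (x₀ : ℝ)
    (w : ℝ → ℝ)
    (hw : ∀ s ∈ Set.Icc (0 : ℝ) T, ∀ t ∈ Set.Icc (0 : ℝ) T, |w s - w t| ≤ L * |s - t|)
    (f f' : ℝ → ℝ → ℝ)
    (hfD : ∀ x y : ℝ, |f x y| ≤ D)
    (hf'D : ∀ x y : ℝ, |f' x y| ≤ D)
    (hfLx : ∀ x₁ x₂ y : ℝ, |f x₁ y - f x₂ y| ≤ Z₁ * |x₁ - x₂|)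
    (hfLy : ∀ x y₁ y₂ : ℝ, |f x y₁ - f x y₂| ≤ Z₂ * |y₁ - y₂|)
    (hff' : ∀ x y : ℝ, |f x y - f' x y| ≤ E)
    (Y : ℝ → ℝ)
    (hY0 : Y 0 = x₀)
    (hYode : ∀ t ∈ Set.Icc (0 : ℝ) T, HasDerivAt Y (f (Y t) (w t)) t)
    (Yh : ℝ → ℝ)
    (hYh0 : Yh 0 = x₀)
    (hYhstep : ∀ k : ℕ, k < m →
      Yh (((k : ℝ) + 1) * (T / m)) =
        Yh ((k : ℝ) * (T / m)) +
          (T / m) * f' (Yh ((k : ℝ) * (T / m))) (w ((k : ℝ) * (T / m))))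
    (hYhinterp : ∀ k : ℕ, k < m → ∀ t : ℝ,
      (k : ℝ) * (T / m) ≤ t → t < ((k : ℝ) + 1) * (T / m) →
      Yh t = Yh ((k : ℝ) * (T / m)) +
        (t - (k : ℝ) * (T / m)) * f' (Yh ((k : ℝ) * (T / m))) (w ((k : ℝ) * (T / m)))) :
    ∀ t ∈ Set.Icc (0 : ℝ) T,
      |Y t - Yh t| ≤ (Z₁ * D * (T / m) + Z₂ * L * (T / m) + E) * T * Real.exp (Z₁ * T) :=
  euler_scheme_error_general T L D Z₁ Z₂ E hT hL hD hZ₁ hZ₂ hE m hm x₀ w hw f f' hfD hfLx hfLy hff'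
    Y hY0 hYode Yh hYh0 hYhstep hYhinterp
end

section
/- Let h : ℝ → ℝ → ℝ satisfy h(x,0) = x and, for each x, the map y ↦ h(x,y) is differentiable with derivative arctan(h(x,y)). Then for all x < 0 and y < 0, exp(−∫₀^y (1/(1 + h(x,s)²)) ds) ≥ exp(|y|/(1 + x²)). (Equivalently, the reciprocal of ∂h/∂x(x,y) = exp(∫₀^y (1/(1+h(x,s)²)) ds) is at least exp(|y|/(1+x²)), so it is unbounded in (x,y).) -/
/-! Along the flow, `(h²)' = 2 h arctan h ≥ 0`, so `s ↦ h(x,s)²` is nondecreasing and on `[y, 0]`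
it stays below `h(x,0)² = x²`. Hence the integrand `1/(1+h²)` is at least `1/(1+x²)` there, and
`-∫₀^y = ∫_y^0` is at least `|y|/(1+x²)`. -/

open Real

theorem Real.mul_arctan_nonneg (u : ℝ) : 0 ≤ u * arctan u :=
  mul_nonneg_iff.2 <| (le_total 0 u).imp (fun hu => ⟨hu, arctan_nonneg.2 hu⟩)
    fun hu => ⟨hu, arctan_le_zero.2 hu⟩

theorem monotone_sq_of_hasDerivAt {f f' : ℝ → ℝ} (hf : ∀ y, HasDerivAt f (f' y) y)
    (hff' : ∀ y, 0 ≤ f y * f' y) : Monotone fun y => f y ^ 2 := by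
  have hsq : ∀ y, HasDerivAt (fun y => f y ^ 2) (2 * (f y * f' y)) y := fun y => by
    simpa [mul_assoc] using (hf y).fun_pow 2
  refine monotone_of_deriv_nonneg (fun y => (hsq y).differentiableAt) fun y => ?_
  rw [(hsq y).deriv]
  exact mul_nonneg zero_le_two (hff' y)

theorem le_integral_one_div_one_add_sq {f : ℝ → ℝ} {a b c : ℝ} (hab : a ≤ b)
    (hf : Continuous f) (hfc : ∀ s ∈ Set.Icc a b, f s ^ 2 ≤ c) :
    (b - a) / (1 + c) ≤ ∫ s in a..b, 1 / (1 + f s ^ 2) := by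
  calc (b - a) / (1 + c) = ∫ _ in a..b, 1 / (1 + c) := by
        rw [intervalIntegral.integral_const, smul_eq_mul]; ring
    _ ≤ ∫ s in a..b, 1 / (1 + f s ^ 2) := by
      refine intervalIntegral.integral_mono_on hab intervalIntegrable_const
        ((continuous_const.div (by fun_prop) fun s => by positivity).intervalIntegrable _ _) fun s hs => ?_
      exact one_div_le_one_div_of_le (by positivity) (by linarith [hfc s hs])

/-- For the flow `h` of `σ(u) = arctan u`, the reciprocal of `∂h/∂x`, namely
`exp(−∫₀^y (1/(1+h(x,s)²)) ds)`, is at least `exp(|y|/(1+x²))` for `x < 0`, `y < 0`. -/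
theorem arctan_flow_inv_unbounded
    (h : ℝ → ℝ → ℝ)
    (hh0 : ∀ x, h x 0 = x)
    (hhy : ∀ x y, HasDerivAt (fun y => h x y) (Real.arctan (h x y)) y) :
    ∀ x < (0 : ℝ), ∀ y < (0 : ℝ),
      Real.exp (-∫ s in (0:ℝ)..y, 1 / (1 + (h x s) ^ 2)) ≥
        Real.exp (|y| / (1 + x ^ 2)) := by
  intro x _ y hy
  have hmono : Monotone fun s => h x s ^ 2 :=
    monotone_sq_of_hasDerivAt (hhy x) fun s => mul_arctan_nonneg (h x s)
  have hcont : Continuous (h x) := continuous_iff_continuousAt.2 fun s => (hhy x s).continuousAt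
  have hbound : ∀ s ∈ Set.Icc y 0, h x s ^ 2 ≤ x ^ 2 := fun s hs => by
    simpa [hh0 x] using hmono hs.2
  rw [ge_iff_le, exp_le_exp, ← intervalIntegral.integral_symm, abs_of_neg hy, ← zero_sub]
  exact le_integral_one_div_one_add_sq hy.le hcont hbound
end

section
/- Let 0 < H < 1/2, a < 0 and 0 ≤ t₁ ≤ t₂. Then ∫_{1/a}^0 ( ∫_{1/a}^s (1/2 − H) [ (t₁ − 1/v)^{H−3/2} − (t₂ − 1/v)^{H−3/2} ] (−1/v)³ dv ) ds ≤ (3/2 − H) (−1/a)^{3/2−H} (t₂ − t₁). -/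
/-!
Put `x = -1/v > 0`. By the mean value theorem, and since `t₁ ≥ 0`,
`(t₁ + x)^(H-3/2) - (t₂ + x)^(H-3/2) ≤ (3/2 - H) x^(H-5/2) (t₂ - t₁)`, so the integrand lies
between `0` and `(1/2 - H)(3/2 - H)(t₂ - t₁)(-v)^(-H-1/2)`, which is integrable at `0` because
`H < 1/2`. Every inner integral is therefore at most `(3/2 - H)(t₂ - t₁)(-1/a)^(1/2-H)`, and the
outer integral runs over an interval of length `-1/a`.
-/

open MeasureTheory Set intervalIntegral

lemma Real.rpow_sub_rpow_le_of_neg {p u w : ℝ} (hp : p < 0) (hu : 0 < u) (huw : u ≤ w) :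
    u ^ p - w ^ p ≤ -p * u ^ (p - 1) * (w - u) := by
  rcases huw.eq_or_lt with rfl | huw
  · simp
  obtain ⟨ξ, ⟨huξ, -⟩, hslope⟩ := exists_hasDerivAt_eq_slope (fun x => x ^ p)
    (fun x => p * x ^ (p - 1)) huw
    (continuousOn_id.rpow_const fun x hx => Or.inl (hu.trans_le hx.1).ne')
    (fun x hx => Real.hasDerivAt_rpow_const (Or.inl (hu.trans hx.1).ne'))
  have hξ : ξ ^ (p - 1) ≤ u ^ (p - 1) := Real.rpow_le_rpow_of_nonpos hu huξ.le (by linarith)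
  calc u ^ p - w ^ p = -p * ξ ^ (p - 1) * (w - u) := by
        rw [neg_mul, hslope, neg_mul, div_mul_cancel₀ _ (sub_ne_zero.2 huw.ne')]; ring
    _ ≤ -p * u ^ (p - 1) * (w - u) :=
        mul_le_mul_of_nonneg_right (mul_le_mul_of_nonneg_left hξ (by linarith)) (by linarith)

lemma Real.add_rpow_sub_add_rpow_le {p x t₁ t₂ : ℝ} (hp : p < 0) (hx : 0 < x) (ht₁ : 0 ≤ t₁)
    (ht : t₁ ≤ t₂) : (t₁ + x) ^ p - (t₂ + x) ^ p ≤ -p * x ^ (p - 1) * (t₂ - t₁) :=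
  calc (t₁ + x) ^ p - (t₂ + x) ^ p ≤ -p * (t₁ + x) ^ (p - 1) * (t₂ + x - (t₁ + x)) :=
        rpow_sub_rpow_le_of_neg hp (by linarith) (by linarith)
    _ ≤ -p * x ^ (p - 1) * (t₂ - t₁) := by
        rw [add_sub_add_right_eq_sub]
        have hx' : (t₁ + x) ^ (p - 1) ≤ x ^ (p - 1) :=
          rpow_le_rpow_of_nonpos hx (by linarith) (by linarith)
        exact mul_le_mul_of_nonneg_right (mul_le_mul_of_nonneg_left hx' (by linarith))
          (by linarith)

lemma intervalIntegrable_neg_rpow {r b : ℝ} (hr : -1 < r) :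
    IntervalIntegrable (fun v : ℝ => (-v) ^ r) volume b 0 := by
  simpa using (intervalIntegrable_rpow' (a := -b) (b := 0) hr).comp_sub_left 0

lemma integral_neg_rpow {r b : ℝ} (hr : -1 < r) :
    ∫ v in b..0, (-v) ^ r = (-b) ^ (r + 1) / (r + 1) := by
  rw [integral_comp_neg (fun x => x ^ r), neg_zero, integral_rpow (Or.inl hr),
    Real.zero_rpow (by linarith), sub_zero]

lemma integral_primitive_le_mul_integral {f g : ℝ → ℝ} {b c : ℝ} (hbc : b ≤ c)
    (hf₀ : ∀ v ∈ Icc b c, 0 ≤ f v) (hfg : ∀ v ∈ Icc b c, f v ≤ g v)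
    (hf : AEStronglyMeasurable f (volume.restrict (uIoc b c)))
    (hg : IntervalIntegrable g volume b c) :
    ∫ s in b..c, ∫ v in b..s, f v ≤ (c - b) * ∫ v in b..c, g v := by
  have hf_int : IntervalIntegrable f volume b c := by
    refine hg.mono_fun' hf ?_
    rw [Filter.EventuallyLE, uIoc_of_le hbc, ae_restrict_iff' measurableSet_Ioc]
    refine Filter.Eventually.of_forall fun v hv => ?_
    rw [Real.norm_eq_abs, abs_of_nonneg (hf₀ v (Ioc_subset_Icc_self hv))]
    exact hfg v (Ioc_subset_Icc_self hv)
  have hprimitive : ∀ s ∈ uIoc b c, ‖∫ v in b..s, f v‖ ≤ ∫ v in b..c, g v := by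
    intro s hs
    rw [uIoc_of_le hbc] at hs
    have hsub : Icc b s ⊆ Icc b c := Icc_subset_Icc_right hs.2
    have hbs : uIcc b s ⊆ uIcc b c := by
      rwa [uIcc_of_le hs.1.le, uIcc_of_le hbc]
    rw [Real.norm_eq_abs, abs_of_nonneg
      (integral_nonneg hs.1.le fun v hv => hf₀ v (hsub hv))]
    calc ∫ v in b..s, f v ≤ ∫ v in b..s, g v :=
          integral_mono_on hs.1.le (hf_int.mono_set hbs) (hg.mono_set hbs)
            fun v hv => hfg v (hsub hv)
      _ ≤ ∫ v in b..c, g v := by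
          refine integral_mono_interval le_rfl hs.1.le hs.2 ?_ hg
          filter_upwards [ae_restrict_mem measurableSet_Ioc] with v hv
          exact (hf₀ v (Ioc_subset_Icc_self hv)).trans (hfg v (Ioc_subset_Icc_self hv))
  calc ∫ s in b..c, ∫ v in b..s, f v ≤ ‖∫ s in b..c, ∫ v in b..s, f v‖ := le_abs_self _
    _ ≤ (∫ v in b..c, g v) * |c - b| := norm_integral_le_of_norm_le_const hprimitive
    _ = (c - b) * ∫ v in b..c, g v := by rw [abs_of_nonneg (sub_nonneg.2 hbc), mul_comm]

/-- Equal to `(∂ₛf_{t₂}(1/v) − ∂ₛf_{t₁}(1/v)) / v³` for the Mandelbrot–van Ness kernel `f_t`. -/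
noncomputable def kernelIntegrand (H t₁ t₂ v : ℝ) : ℝ :=
  (1 / 2 - H) * ((t₁ - 1 / v) ^ (H - 3 / 2) - (t₂ - 1 / v) ^ (H - 3 / 2)) * (-(1 / v)) ^ (3 : ℕ)

section kernelIntegrand

variable {H t₁ t₂ v : ℝ}

@[simp]
lemma kernelIntegrand_zero : kernelIntegrand H t₁ t₂ 0 = 0 := by
  simp [kernelIntegrand]

lemma measurable_kernelIntegrand : Measurable (kernelIntegrand H t₁ t₂) := by
  unfold kernelIntegrand
  fun_prop

lemma kernelIntegrand_nonneg (hH : H ≤ 1 / 2) (ht₁ : 0 ≤ t₁) (ht : t₁ ≤ t₂) (hv : v ≤ 0) :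
    0 ≤ kernelIntegrand H t₁ t₂ v := by
  rcases hv.lt_or_eq with hv | rfl
  · have hx : 0 < -(1 / v) := neg_pos.2 (one_div_neg.2 hv)
    have hdiff : (t₂ - 1 / v) ^ (H - 3 / 2) ≤ (t₁ - 1 / v) ^ (H - 3 / 2) :=
      Real.rpow_le_rpow_of_nonpos (by linarith) (by linarith) (by linarith)
    exact mul_nonneg (mul_nonneg (by linarith) (by linarith)) (by positivity)
  · simp

lemma kernelIntegrand_le (hH : H ≤ 1 / 2) (ht₁ : 0 ≤ t₁) (ht : t₁ ≤ t₂) (hv : v ≤ 0) :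
    kernelIntegrand H t₁ t₂ v ≤ (1 / 2 - H) * (3 / 2 - H) * (t₂ - t₁) * (-v) ^ (-H - 1 / 2) := by
  rcases hv.lt_or_eq with hv | rfl
  · set x := -(1 / v) with hx_def
    have hx : 0 < x := neg_pos.2 (one_div_neg.2 hv)
    have hdiff := Real.add_rpow_sub_add_rpow_le (p := H - 3 / 2) (by linarith) hx ht₁ ht
    have hpow : x ^ (H - 3 / 2 - 1) * x ^ (3 : ℕ) = (-v) ^ (-H - 1 / 2) := by
      rw [← Real.rpow_natCast, ← Real.rpow_add hx, hx_def, one_div, ← inv_neg,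
        Real.inv_rpow (by linarith), ← Real.rpow_neg (by linarith)]
      congr 1
      ring
    calc kernelIntegrand H t₁ t₂ v
        = (1 / 2 - H) * ((t₁ + x) ^ (H - 3 / 2) - (t₂ + x) ^ (H - 3 / 2)) * x ^ (3 : ℕ) := by
          simp only [kernelIntegrand, hx_def, sub_eq_add_neg]
      _ ≤ (1 / 2 - H) * (-(H - 3 / 2) * x ^ (H - 3 / 2 - 1) * (t₂ - t₁)) * x ^ (3 : ℕ) := by
          gcongr
      _ = (1 / 2 - H) * (3 / 2 - H) * (t₂ - t₁) * (-v) ^ (-H - 1 / 2) := by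
          rw [← hpow]; ring
  · simpa using mul_nonneg (mul_nonneg (mul_nonneg (by linarith) (by linarith)) (by linarith))
      (Real.rpow_nonneg le_rfl (-H - 1 / 2))

end kernelIntegrand

theorem kernel_double_integral_H_small_general
    (H a t₁ t₂ : ℝ) (hH : H < 1 / 2) (ha : a < 0)
    (ht₁ : 0 ≤ t₁) (ht : t₁ ≤ t₂) :
    (∫ s in (1 / a)..(0:ℝ), ∫ v in (1 / a)..s,
        (1 / 2 - H) * ((t₁ - 1 / v) ^ (H - 3 / 2) - (t₂ - 1 / v) ^ (H - 3 / 2)) *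
          (-(1 / v)) ^ (3 : ℕ)) ≤
      (3 / 2 - H) * (-(1 / a)) ^ (3 / 2 - H) * (t₂ - t₁) := by
  have hb : 1 / a < 0 := one_div_neg.2 ha
  have hr : -1 < -H - 1 / 2 := by linarith
  have key := integral_primitive_le_mul_integral hb.le
    (fun v hv => kernelIntegrand_nonneg hH.le ht₁ ht hv.2)
    (fun v hv => kernelIntegrand_le hH.le ht₁ ht hv.2)
    measurable_kernelIntegrand.aestronglyMeasurable
    ((intervalIntegrable_neg_rpow hr).const_mul _)
  refine key.trans_eq ?_
  rw [intervalIntegral.integral_const_mul, integral_neg_rpow hr,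
    show -H - 1 / 2 + 1 = 1 / 2 - H by ring, show (3 / 2 - H : ℝ) = 1 / 2 - H + 1 by ring,
    Real.rpow_add (by linarith), Real.rpow_one]
  have hcancel : (1 / 2 - H) * (1 / 2 - H)⁻¹ = 1 := mul_inv_cancel₀ (by linarith)
  linear_combination (-(1 / a)) * (3 / 2 - H) * (t₂ - t₁) * (-(1 / a)) ^ (1 / 2 - H) * hcancel

/-- Double-integral kernel estimate for `H < 1/2`:
`∫_{1/a}^0 (∫_{1/a}^s (1/2−H)[(t₁−1/v)^{H−3/2} − (t₂−1/v)^{H−3/2}](−1/v)³ dv) ds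
  ≤ (3/2−H)(−1/a)^{3/2−H}(t₂ − t₁)`. -/
theorem kernel_double_integral_H_small
    (H a t₁ t₂ : ℝ) (hH0 : 0 < H) (hH : H < 1 / 2) (ha : a < 0)
    (ht₁ : 0 ≤ t₁) (ht : t₁ ≤ t₂) :
    (∫ s in (1 / a)..(0:ℝ), ∫ v in (1 / a)..s,
        (1 / 2 - H) * ((t₁ - 1 / v) ^ (H - 3 / 2) - (t₂ - 1 / v) ^ (H - 3 / 2)) *
          (-(1 / v)) ^ (3 : ℕ)) ≤
      (3 / 2 - H) * (-(1 / a)) ^ (3 / 2 - H) * (t₂ - t₁) :=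
  kernel_double_integral_H_small_general H a t₁ t₂ hH ha ht₁ ht
end

section
/- Let 0 < H < 1/2, a < ε < 0 and 0 ≤ t₁ ≤ t₂. Then ∫_a^{ε} [ (t₁ − s)^{H−1/2} − (t₂ − s)^{H−1/2} ] ds ≤ (−ε)^{H−1/2} (t₂ − t₁). (Note the integrand is nonnegative since H − 1/2 < 0 and t₁ ≤ t₂.) -/
/-! After the substitution `u = t - s`, the integral is
`∫_{t₁-ε}^{t₂-ε} u^p du - ∫_{t₁-a}^{t₂-a} u^p du` with `p = H - 1/2 < 0`. The second integral is nonnegative, and on `[t₁-ε, t₂-ε]` the decreasing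
function `u ↦ u^p` is at most `(-ε)^p` because `t₁ ≥ 0`. -/

open Set MeasureTheory intervalIntegral

theorem integral_comp_sub_sub_comp_sub {g : ℝ → ℝ} {a b t₁ t₂ : ℝ}
    (h₁ : IntervalIntegrable g volume (t₁ - b) (t₁ - a))
    (h₂ : IntervalIntegrable g volume (t₂ - b) (t₂ - a))
    (h₁₂ : IntervalIntegrable g volume (t₁ - b) (t₂ - b)) :
    ∫ s in a..b, (g (t₁ - s) - g (t₂ - s)) =
      (∫ u in t₁ - b..t₂ - b, g u) - ∫ u in t₁ - a..t₂ - a, g u := by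
  have hcomp : ∀ {t}, IntervalIntegrable g volume (t - b) (t - a) →
      IntervalIntegrable (fun s ↦ g (t - s)) volume a b := fun {t} h ↦ by
    simpa using (h.comp_sub_left t).symm
  rw [integral_sub (hcomp h₁) (hcomp h₂), integral_comp_sub_left, integral_comp_sub_left,
    integral_interval_sub_interval_comm h₁ h₂ h₁₂]

theorem integral_comp_sub_sub_comp_sub_le_of_antitoneOn {g : ℝ → ℝ} {a b c t₁ t₂ : ℝ}
    (hg : AntitoneOn g (Ici c)) (hg_nonneg : ∀ x ∈ Ici c, 0 ≤ g x)
    (hab : a ≤ b) (ht : t₁ ≤ t₂) (hc : c ≤ t₁ - b) :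
    ∫ s in a..b, (g (t₁ - s) - g (t₂ - s)) ≤ g c * (t₂ - t₁) := by
  have hint : ∀ {x y}, c ≤ x → c ≤ y → IntervalIntegrable g volume x y := fun hx hy ↦
    AntitoneOn.intervalIntegrable <| hg.mono fun _ hz ↦ (le_min hx hy).trans hz.1
  rw [integral_comp_sub_sub_comp_sub (hint (by linarith) (by linarith))
    (hint (by linarith) (by linarith)) (hint (by linarith) (by linarith))]
  have hnear : ∫ u in t₁ - b..t₂ - b, g u ≤ g c * (t₂ - t₁) := by
    calc ∫ u in t₁ - b..t₂ - b, g u ≤ ∫ _ in t₁ - b..t₂ - b, g c :=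
          integral_mono_on (by linarith) (hint (by linarith) (by linarith))
            intervalIntegrable_const fun x hx ↦
              hg self_mem_Ici (hc.trans hx.1) (hc.trans hx.1)
      _ = g c * (t₂ - t₁) := by rw [intervalIntegral.integral_const, smul_eq_mul]; ring
  have hfar : 0 ≤ ∫ u in t₁ - a..t₂ - a, g u :=
    integral_nonneg (by linarith) fun x hx ↦ hg_nonneg x (by simp only [mem_Ici]; linarith [hx.1])
  linarith

theorem truncated_kernel_estimate_H_small_general
    (H a ε t₁ t₂ : ℝ) (hH : H < 1 / 2)
    (ha : a < ε) (hε : ε < 0)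
    (ht₁ : 0 ≤ t₁) (ht : t₁ ≤ t₂) :
    (∫ s in a..ε, ((t₁ - s) ^ (H - 1 / 2) - (t₂ - s) ^ (H - 1 / 2))) ≤
      (-ε) ^ (H - 1 / 2) * (t₂ - t₁) := by
  have hpos : Ici (-ε) ⊆ Ioi 0 := fun _ hx ↦ lt_of_lt_of_le (neg_pos.mpr hε) hx
  exact integral_comp_sub_sub_comp_sub_le_of_antitoneOn
    ((Real.antitoneOn_rpow_Ioi_of_exponent_nonpos (by linarith)).mono hpos)
    (fun x hx ↦ Real.rpow_nonneg (hpos hx).le _) ha.le ht (by linarith)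

/-- Truncated kernel estimate for `H < 1/2`, `a < ε < 0`:
`∫_a^ε [(t₁−s)^{H−1/2} − (t₂−s)^{H−1/2}] ds ≤ (−ε)^{H−1/2}(t₂ − t₁)`. -/
theorem truncated_kernel_estimate_H_small
    (H a ε t₁ t₂ : ℝ) (hH0 : 0 < H) (hH : H < 1 / 2)
    (ha : a < ε) (hε : ε < 0)
    (ht₁ : 0 ≤ t₁) (ht : t₁ ≤ t₂) :
    (∫ s in a..ε, ((t₁ - s) ^ (H - 1 / 2) - (t₂ - s) ^ (H - 1 / 2))) ≤
      (-ε) ^ (H - 1 / 2) * (t₂ - t₁) :=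
  truncated_kernel_estimate_H_small_general H a ε t₁ t₂ hH ha hε ht₁ ht
end
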